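/- Define positive integers b̆_n(i) for n ≥ 1 and i ≥ 0 by: b̆_1(i) = 2i+1, and b̆_n(i) = b̆_{n−1}(i) + 2·Σ_{j=0}^{i−1} b̆_{n−1}(j) for n ≥ 2. Then for all n ≥ 1 and i ≥ 0: 2^n·binom(i, n) ≤ b̆_n(i) ≤ 2^n·binom(i+n, n). -/
import Mathlib


/-- The recursively defined bounds `b̆_n(i)` of the cup-length case:
`b̆_0(i) = 1`, `b̆_1(i) = 2 i + 1`, and
`b̆_n(i) = b̆_{n-1}(i) + 2 ∑_{j < i} b̆_{n-1}(j)` for `n ≥ 2`. -/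
def bcup : ℕ → ℕ → ℕ
  | 0, _ => 1
  | 1, i => 2 * i + 1
  | n + 2, i => bcup (n + 1) i + 2 * ∑ j ∈ Finset.range i, bcup (n + 1) j

lemma hockey (n i : ℕ) : ∑ j ∈ Finset.range i, Nat.choose j n = Nat.choose i (n + 1) := by
  induction i with
  | zero => simp
  | succ i ih =>
      rw [Finset.sum_range_succ, ih, Nat.choose_succ_succ i n]
      simp [Nat.succ_eq_add_one]
      omega

lemma hockey2 (n i : ℕ) :
    ∑ j ∈ Finset.range i, Nat.choose (j + n) n = Nat.choose (i + n) (n + 1) := by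
  induction i with
  | zero => simp [Nat.choose_eq_zero_of_lt]
  | succ i ih =>
      rw [Finset.sum_range_succ, ih]
      have : i + 1 + n = (i + n) + 1 := by omega
      rw [this, Nat.choose_succ_succ (i + n) n]
      simp [Nat.succ_eq_add_one]
      omega

lemma bcup_bounds_aux (n : ℕ) : ∀ i, 2 ^ (n + 1) * Nat.choose i (n + 1) ≤ bcup (n + 1) i ∧
    bcup (n + 1) i ≤ 2 ^ (n + 1) * Nat.choose (i + (n + 1)) (n + 1) := by
  induction n with
  | zero =>
      intro i
      simp [bcup, Nat.choose_one_right]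
  | succ m ih =>
      intro i
      have hlow : ∑ j ∈ Finset.range i, 2 ^ (m + 1) * Nat.choose j (m + 1) ≤
          ∑ j ∈ Finset.range i, bcup (m + 1) j :=
        Finset.sum_le_sum fun j _ => (ih j).1
      have hup : ∑ j ∈ Finset.range i, bcup (m + 1) j ≤
          ∑ j ∈ Finset.range i, 2 ^ (m + 1) * Nat.choose (j + (m + 1)) (m + 1) :=
        Finset.sum_le_sum fun j _ => (ih j).2
      rw [← Finset.mul_sum, hockey] at hlow
      rw [← Finset.mul_sum, hockey2] at hup
      have hlow' : 2 ^ (m + 1) * Nat.choose i (m + 2) ≤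
          ∑ j ∈ Finset.range i, bcup (m + 1) j := hlow
      have hup' : ∑ j ∈ Finset.range i, bcup (m + 1) j ≤
          2 ^ (m + 1) * Nat.choose (i + (m + 1)) (m + 2) := hup
      have h1 := (ih i).1
      have h2 := (ih i).2
      have hb : bcup (m + 2) i = bcup (m + 1) i + 2 * ∑ j ∈ Finset.range i, bcup (m + 1) j :=
        rfl
      constructor
      · calc 2 ^ (m + 2) * Nat.choose i (m + 2)
            = 2 * (2 ^ (m + 1) * Nat.choose i (m + 2)) := by ring
          _ ≤ 2 * ∑ j ∈ Finset.range i, bcup (m + 1) j := by omega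
          _ ≤ bcup (m + 2) i := by rw [hb]; omega
      · have hpascal : Nat.choose (i + (m + 2)) (m + 2) =
            Nat.choose (i + (m + 1)) (m + 1) + Nat.choose (i + (m + 1)) (m + 2) := by
          have : i + (m + 2) = (i + (m + 1)) + 1 := by omega
          rw [this, Nat.choose_succ_succ]
        rw [hb, hpascal]
        have : 2 ^ (m + 2) = 2 * 2 ^ (m + 1) := by ring
        rw [this]
        nlinarith [h2, hup']

/-- **Remark (closed-form estimates for `b̆_n(i)`).**
For all `n ≥ 1` and all `i`: `2^n C(i, n) ≤ b̆_n(i) ≤ 2^n C(i+n, n)`. -/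
theorem bcup_bounds (n i : ℕ) (hn : 1 ≤ n) :
    2 ^ n * Nat.choose i n ≤ bcup n i ∧ bcup n i ≤ 2 ^ n * Nat.choose (i + n) n := by
  obtain ⟨m, rfl⟩ := Nat.exists_eq_add_of_le hn
  simpa [Nat.add_comm] using bcup_bounds_aux m i
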